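/- Under Assumption (A1)-(A3) (ν absolutely continuous, supp(μ) ⊆ int(co(supp ν)), density of ν bounded below on co(supp ν)): for bounded measurable Q, Q̃ : (0,1) → ℝ, define S_Q(x) = ∫_ℝ Q_ν(∫₀¹ Φ(x − Q(y) − z) dy) φ(z) dz. Then the derivatives satisfy the Lipschitz-type bound ‖S_Q' − S_{Q̃}'‖_∞ ≤ L ‖Q − Q̃‖_∞, where L is the Lipschitz constant of Q_ν. -/

import Mathlib

/-!
With `F_Q(u) = ∫₀¹ Φ(u − Q y) dy` and `H_Q = Q_ν ∘ F_Q`, the substitution `u = x − z` shows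
that `S_Q = H_Q ⋆ φ`. When `Q` is bounded, `F_Q` takes values in `(0,1)` and is 1-Lipschitz,
so `H_Q` is bounded and continuous, and differentiating under the integral sign gives
`S_Q' = H_Q ⋆ φ'`. Since `Φ` is 1-Lipschitz, `|F_Q − F_Q̃| ≤ ‖Q − Q̃‖_∞`, hence
`|H_Q − H_Q̃| ≤ L ‖Q − Q̃‖_∞`, and `∫ |φ'| = 2 φ(0) ≤ 1` yields the bound.
-/

open MeasureTheory ProbabilityTheory Filter Topology

noncomputable def stdGauss (x : ℝ) : ℝ := Real.exp (-(x ^ 2) / 2) / Real.sqrt (2 * Real.pi)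

noncomputable def stdGaussCDF (x : ℝ) : ℝ := ∫ t in Set.Iic x, stdGauss t

noncomputable def quantile (ν : Measure ℝ) (u : ℝ) : ℝ :=
  sInf {x : ℝ | u ≤ ProbabilityTheory.cdf ν x}

def msupport (ν : Measure ℝ) : Set ℝ := {x | ∀ U ∈ nhds x, 0 < ν U}

/-- `S_Q(x) = ∫ Q_ν(∫₀¹ Φ(x − Q(y) − z) dy) φ(z) dz`. -/
noncomputable def opS (ν : Measure ℝ) (Q : ℝ → ℝ) : ℝ → ℝ := fun x =>
  ∫ z, quantile ν (∫ y in Set.Ioo (0 : ℝ) 1, stdGaussCDF (x - Q y - z)) * stdGauss z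

open Real Set

lemma stdGauss_eq_gaussianPDFReal : stdGauss = gaussianPDFReal 0 1 := by
  ext x
  simp [stdGauss, gaussianPDFReal, div_eq_inv_mul]

lemma stdGauss_pos (x : ℝ) : 0 < stdGauss x := by
  rw [stdGauss_eq_gaussianPDFReal]
  exact gaussianPDFReal_pos _ _ _ one_ne_zero

lemma integrable_stdGauss : Integrable stdGauss :=
  stdGauss_eq_gaussianPDFReal ▸ integrable_gaussianPDFReal 0 1

lemma integral_stdGauss : ∫ x, stdGauss x = 1 := by
  rw [stdGauss_eq_gaussianPDFReal]
  exact integral_gaussianPDFReal_eq_one 0 one_ne_zero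

lemma continuous_stdGauss : Continuous stdGauss := by
  unfold stdGauss
  fun_prop

lemma stdGauss_abs (x : ℝ) : stdGauss |x| = stdGauss x := by
  simp only [stdGauss, sq_abs]

lemma two_le_sqrt_two_pi : 2 ≤ √(2 * π) :=
  Real.le_sqrt_of_sq_le (by nlinarith [Real.pi_gt_three])

lemma stdGauss_le_exp (x : ℝ) : stdGauss x ≤ exp (-(x ^ 2) / 2) :=
  div_le_self (exp_nonneg _) (by linarith [two_le_sqrt_two_pi])

lemma stdGauss_le_one (x : ℝ) : stdGauss x ≤ 1 :=
  (stdGauss_le_exp x).trans (exp_le_one_iff.2 (by nlinarith [sq_nonneg x]))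

lemma two_mul_stdGauss_zero_le_one : 2 * stdGauss 0 ≤ 1 := by
  rw [stdGauss, mul_div_assoc', div_le_one (by linarith [two_le_sqrt_two_pi])]
  simpa using two_le_sqrt_two_pi

lemma hasDerivAt_stdGauss (x : ℝ) : HasDerivAt stdGauss (-x * stdGauss x) x := by
  have h : HasDerivAt (fun t : ℝ => -(t ^ 2) / 2) (-x) x :=
    ((hasDerivAt_pow 2 x).neg.div_const 2).congr_deriv (by norm_num; ring)
  exact (h.exp.div_const √(2 * π)).congr_deriv (by unfold stdGauss; ring)

lemma tendsto_stdGauss_atTop : Tendsto stdGauss atTop (𝓝 0) := by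
  unfold stdGauss
  have h : Tendsto (fun x : ℝ => -(x ^ 2) / 2) atTop atBot :=
    (tendsto_neg_atTop_atBot.comp (tendsto_pow_atTop two_ne_zero)).atBot_div_const two_pos
  simpa only [zero_div, Function.comp_def] using (tendsto_exp_atBot.comp h).div_const √(2 * π)

lemma integrable_mul_stdGauss : Integrable fun t => t * stdGauss t := by
  refine ((integrable_mul_exp_neg_mul_sq (by norm_num : (0 : ℝ) < 2⁻¹)).div_const
    √(2 * π)).congr (.of_forall fun t => ?_)
  simp only [stdGauss]
  ring_nf

lemma integral_Ioi_mul_stdGauss : ∫ t in Ioi 0, t * stdGauss t = stdGauss 0 := by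
  have h := integral_Ioi_of_hasDerivAt_of_tendsto' (a := 0) (f := fun t => -stdGauss t)
    (fun t _ => ((hasDerivAt_stdGauss t).neg).congr_deriv (by ring))
    integrable_mul_stdGauss.integrableOn tendsto_stdGauss_atTop.neg
  simpa using h

lemma integral_abs_mul_stdGauss_le : ∫ t, |t| * stdGauss t ≤ 1 := by
  have h : ∫ t, |t| * stdGauss t = 2 * stdGauss 0 := by
    rw [← integral_Ioi_mul_stdGauss, ← integral_comp_abs (f := fun t => t * stdGauss t)]
    simp only [stdGauss_abs]
  exact h ▸ two_mul_stdGauss_zero_le_one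

lemma abs_le_exp_sq_div_four (t : ℝ) : |t| ≤ exp (t ^ 2 / 4) := by
  nlinarith [sq_nonneg (|t| - 2), sq_abs t, add_one_le_exp (t ^ 2 / 4)]

-- A bound on `|φ'(t)|` uniform for `t` near `s` and integrable in `s`: it dominates the
-- derivative when differentiating `∫ H u φ(x − u) du` under the integral sign.
lemma abs_mul_stdGauss_le_of_abs_sub_le {s t : ℝ} (h : |t - s| ≤ 1) :
    |t| * stdGauss t ≤ exp (1 / 4 - s ^ 2 / 8) :=
  calc |t| * stdGauss t ≤ exp (t ^ 2 / 4) * exp (-(t ^ 2) / 2) :=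
        mul_le_mul (abs_le_exp_sq_div_four t) (stdGauss_le_exp t) (stdGauss_pos t).le
          (exp_nonneg _)
    _ ≤ exp (1 / 4 - s ^ 2 / 8) := by
        rw [← exp_add]
        gcongr
        nlinarith [sq_abs (t - s), abs_nonneg (t - s), sq_nonneg (t + t - s)]

lemma integrable_exp_sub_sq (x₀ : ℝ) :
    Integrable fun u => exp (1 / 4 - (x₀ - u) ^ 2 / 8) := by
  refine (((integrable_exp_neg_mul_sq (by norm_num : (0 : ℝ) < 8⁻¹)).comp_sub_left
    x₀).const_mul (exp (1 / 4))).congr (.of_forall fun u => ?_)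
  simp only [← exp_add]
  ring_nf

section gaussianSmoothing

variable {H : ℝ → ℝ} {M : ℝ} (hM : ∀ u, |H u| ≤ M)
include hM

lemma integrable_mul_deriv_stdGauss (hH : AEStronglyMeasurable H) (x : ℝ) :
    Integrable fun u => H u * (-(x - u) * stdGauss (x - u)) :=
  ((integrable_mul_stdGauss.comp_sub_left x).neg.congr
    (.of_forall fun _ => (neg_mul _ _).symm)).bdd_mul hH (.of_forall hM)

lemma hasDerivAt_integral_mul_stdGauss (hH : AEStronglyMeasurable H) (x₀ : ℝ) :
    HasDerivAt (fun x => ∫ u, H u * stdGauss (x - u))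
      (∫ u, H u * (-(x₀ - u) * stdGauss (x₀ - u))) x₀ := by
  have hφ (x : ℝ) : Continuous fun u => stdGauss (x - u) :=
    continuous_stdGauss.comp (continuous_const.sub continuous_id)
  refine (hasDerivAt_integral_of_dominated_loc_of_deriv_le (Metric.ball_mem_nhds x₀ one_pos)
    (F' := fun x u => H u * (-(x - u) * stdGauss (x - u)))
    (bound := fun u => M * exp (1 / 4 - (x₀ - u) ^ 2 / 8))
    (.of_forall fun x => hH.mul (hφ x).aestronglyMeasurable)
    ((integrable_stdGauss.comp_sub_left x₀).bdd_mul hH (.of_forall hM))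
    (integrable_mul_deriv_stdGauss hM hH x₀).aestronglyMeasurable
    (.of_forall fun u x hx => ?_) ((integrable_exp_sub_sq x₀).const_mul M)
    (.of_forall fun u x _ => ?_)).2
  · have hx : |x - u - (x₀ - u)| ≤ 1 := by
      rw [sub_sub_sub_cancel_right, ← Real.dist_eq]
      exact (Metric.mem_ball.1 hx).le
    rw [norm_mul, norm_mul, norm_neg, Real.norm_eq_abs, Real.norm_eq_abs,
      Real.norm_of_nonneg (stdGauss_pos _).le]
    exact mul_le_mul (hM u) (abs_mul_stdGauss_le_of_abs_sub_le hx)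
      (by positivity [stdGauss_pos (x - u)]) ((abs_nonneg _).trans (hM u))
  · exact (((hasDerivAt_stdGauss (x - u)).comp x ((hasDerivAt_id x).sub_const u)).const_mul
      (H u)).congr_deriv (by rw [mul_one])

lemma abs_integral_mul_deriv_stdGauss_le (x : ℝ) :
    |∫ u, H u * (-(x - u) * stdGauss (x - u))| ≤ M := by
  have habs : Integrable fun t => |t| * stdGauss t :=
    integrable_mul_stdGauss.abs.congr (.of_forall fun t => by
      dsimp only
      rw [abs_mul, abs_of_pos (stdGauss_pos t)])
  calc |∫ u, H u * (-(x - u) * stdGauss (x - u))|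
      ≤ ∫ u, M * (|x - u| * stdGauss (x - u)) := by
        refine abs_integral_le_integral_abs.trans (integral_mono_of_nonneg
          (.of_forall fun _ => abs_nonneg _) ((habs.comp_sub_left x).const_mul M)
          (.of_forall fun u => ?_))
        dsimp only
        rw [abs_mul, abs_mul, abs_neg, abs_of_pos (stdGauss_pos _)]
        exact mul_le_mul_of_nonneg_right (hM u) (by positivity [stdGauss_pos (x - u)])
    _ = M * ∫ t, |t| * stdGauss t := by
        rw [integral_const_mul, integral_sub_left_eq_self (fun t => |t| * stdGauss t)]
    _ ≤ M := mul_le_of_le_one_right ((abs_nonneg _).trans (hM 0)) integral_abs_mul_stdGauss_le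

end gaussianSmoothing

lemma stdGaussCDF_sub_stdGaussCDF (a b : ℝ) :
    stdGaussCDF b - stdGaussCDF a = ∫ t in a..b, stdGauss t :=
  intervalIntegral.integral_Iic_sub_Iic integrable_stdGauss.integrableOn
    integrable_stdGauss.integrableOn

lemma strictMono_stdGaussCDF : StrictMono stdGaussCDF := fun a b hab => by
  rw [← sub_pos, stdGaussCDF_sub_stdGaussCDF]
  exact intervalIntegral.intervalIntegral_pos_of_pos_on
    (continuous_stdGauss.intervalIntegrable a b) (fun t _ => stdGauss_pos t) hab

lemma lipschitzWith_stdGaussCDF : LipschitzWith 1 stdGaussCDF :=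
  LipschitzWith.of_dist_le_mul fun a b => by
    rw [NNReal.coe_one, one_mul, dist_eq_norm, dist_comm, dist_eq_norm,
      stdGaussCDF_sub_stdGaussCDF]
    simpa [abs_sub_comm] using intervalIntegral.norm_integral_le_of_norm_le_const
      (f := stdGauss) (a := b) (b := a) (C := 1)
      fun t _ => by simpa [abs_of_pos (stdGauss_pos t)] using stdGauss_le_one t

lemma stdGaussCDF_nonneg (x : ℝ) : 0 ≤ stdGaussCDF x :=
  setIntegral_nonneg measurableSet_Iic fun t _ => (stdGauss_pos t).le

lemma stdGaussCDF_le_one (x : ℝ) : stdGaussCDF x ≤ 1 :=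
  integral_stdGauss ▸
    setIntegral_le_integral integrable_stdGauss (.of_forall fun t => (stdGauss_pos t).le)

lemma stdGaussCDF_mem_Ioo (x : ℝ) : stdGaussCDF x ∈ Ioo 0 1 :=
  ⟨(stdGaussCDF_nonneg (x - 1)).trans_lt (strictMono_stdGaussCDF (by linarith)),
    (strictMono_stdGaussCDF (lt_add_one x)).trans_le (stdGaussCDF_le_one (x + 1))⟩

-- `F_Q`, the distribution function of `Q U + Z` for `U` uniform on `(0,1)`, `Z` standard normal.
noncomputable def smoothedCDF (Q : ℝ → ℝ) (u : ℝ) : ℝ :=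
  ∫ y in Ioo (0 : ℝ) 1, stdGaussCDF (u - Q y)

-- `H_Q = Q_ν ∘ F_Q`, the monotone map pushing the law of `Q U + Z` forward to `ν`.
noncomputable def transportMap (ν : Measure ℝ) (Q : ℝ → ℝ) (u : ℝ) : ℝ :=
  quantile ν (smoothedCDF Q u)

lemma opS_eq_integral_transportMap_mul (ν : Measure ℝ) (Q : ℝ → ℝ) (x : ℝ) :
    opS ν Q x = ∫ u, transportMap ν Q u * stdGauss (x - u) := by
  rw [← integral_sub_left_eq_self _ volume x]
  simp only [opS, transportMap, smoothedCDF, sub_sub_cancel, sub_right_comm x]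

section smoothedCDF

variable {Q Q' : ℝ → ℝ}

lemma integrableOn_stdGaussCDF_sub (hQ : Measurable Q) (u : ℝ) :
    IntegrableOn (fun y => stdGaussCDF (u - Q y)) (Ioo 0 1) :=
  Measure.integrableOn_of_bounded (by simp)
    (lipschitzWith_stdGaussCDF.continuous.measurable.comp
      (measurable_const.sub hQ)).aestronglyMeasurable
    (M := 1) (.of_forall fun y => by
      simpa [abs_of_nonneg (stdGaussCDF_nonneg _)] using stdGaussCDF_le_one _)

lemma abs_smoothedCDF_sub_le (hQ : Measurable Q) (hQ' : Measurable Q') {u v C : ℝ}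
    (h : ∀ y ∈ Ioo (0 : ℝ) 1, |u - Q y - (v - Q' y)| ≤ C) :
    |smoothedCDF Q u - smoothedCDF Q' v| ≤ C := by
  rw [smoothedCDF, smoothedCDF, ← integral_sub (integrableOn_stdGaussCDF_sub hQ u)
    (integrableOn_stdGaussCDF_sub hQ' v)]
  have hpt : ∀ y ∈ Ioo (0 : ℝ) 1,
      ‖stdGaussCDF (u - Q y) - stdGaussCDF (v - Q' y)‖ ≤ C := fun y hy =>
    (dist_eq_norm _ _).symm.trans_le <|
      (lipschitzWith_stdGaussCDF.dist_le_mul _ _).trans (by simpa [dist_eq_norm] using h y hy)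
  simpa using norm_integral_le_of_norm_le_const
    (ae_restrict_of_forall_mem (μ := volume) measurableSet_Ioo hpt)

lemma smoothedCDF_mem_Ioo (hQ : Measurable Q) {R : ℝ}
    (hQb : ∀ y ∈ Ioo (0 : ℝ) 1, |Q y| ≤ R) (u : ℝ) : smoothedCDF Q u ∈ Ioo 0 1 := by
  have hconst (a : ℝ) : ∫ _ in Ioo (0 : ℝ) 1, stdGaussCDF a = stdGaussCDF a := by simp
  have lower : stdGaussCDF (u - R) ≤ smoothedCDF Q u := hconst (u - R) ▸
    setIntegral_mono_on (by simp) (integrableOn_stdGaussCDF_sub hQ u) measurableSet_Ioo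
      fun y hy => strictMono_stdGaussCDF.monotone (by linarith [(abs_le.1 (hQb y hy)).2])
  have upper : smoothedCDF Q u ≤ stdGaussCDF (u + R) := hconst (u + R) ▸
    setIntegral_mono_on (integrableOn_stdGaussCDF_sub hQ u) (by simp) measurableSet_Ioo
      fun y hy => strictMono_stdGaussCDF.monotone (by linarith [(abs_le.1 (hQb y hy)).1])
  exact ⟨(stdGaussCDF_mem_Ioo _).1.trans_le lower, upper.trans_lt (stdGaussCDF_mem_Ioo _).2⟩

end smoothedCDF

section transportMap

variable {ν : Measure ℝ} {L : ℝ} (hL0 : 0 ≤ L)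
  (hL : ∀ u ∈ Ioo (0 : ℝ) 1, ∀ v ∈ Ioo (0 : ℝ) 1,
    |quantile ν u - quantile ν v| ≤ L * |u - v|)
  {Q : ℝ → ℝ} (hQ : Measurable Q) {R : ℝ} (hQb : ∀ y ∈ Ioo (0 : ℝ) 1, |Q y| ≤ R)
include hL0 hL hQ hQb

lemma abs_transportMap_sub_le {Q' : ℝ → ℝ} (hQ' : Measurable Q')
    (hQ'b : ∀ y ∈ Ioo (0 : ℝ) 1, |Q' y| ≤ R) {u v C : ℝ}
    (h : ∀ y ∈ Ioo (0 : ℝ) 1, |u - Q y - (v - Q' y)| ≤ C) :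
    |transportMap ν Q u - transportMap ν Q' v| ≤ L * C :=
  (hL _ (smoothedCDF_mem_Ioo hQ hQb u) _ (smoothedCDF_mem_Ioo hQ' hQ'b v)).trans
    (mul_le_mul_of_nonneg_left (abs_smoothedCDF_sub_le hQ hQ' h) hL0)

lemma lipschitzWith_transportMap : LipschitzWith (Real.toNNReal L) (transportMap ν Q) :=
  LipschitzWith.of_dist_le_mul fun u v => by
    rw [Real.coe_toNNReal L hL0, Real.dist_eq, Real.dist_eq]
    exact abs_transportMap_sub_le hL0 hL hQ hQb hQ hQb fun y _ =>
      (congrArg abs (sub_sub_sub_cancel_right u v (Q y))).le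

lemma abs_transportMap_le (u : ℝ) : |transportMap ν Q u| ≤ |quantile ν (1 / 2)| + L := by
  have hp := smoothedCDF_mem_Ioo hQ hQb u
  have hq : |transportMap ν Q u - quantile ν (1 / 2)| ≤ L :=
    (hL _ hp (1 / 2) (by norm_num)).trans (mul_le_of_le_one_right hL0
      (abs_le.2 ⟨by linarith [hp.1], by linarith [hp.2]⟩))
  linarith [abs_sub_abs_le_abs_sub (transportMap ν Q u) (quantile ν (1 / 2))]

lemma integrable_transportMap_mul_deriv_stdGauss (x : ℝ) :
    Integrable fun u => transportMap ν Q u * (-(x - u) * stdGauss (x - u)) :=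
  integrable_mul_deriv_stdGauss (abs_transportMap_le hL0 hL hQ hQb)
    (lipschitzWith_transportMap hL0 hL hQ hQb).continuous.aestronglyMeasurable x

lemma hasDerivAt_opS (x : ℝ) :
    HasDerivAt (opS ν Q) (∫ u, transportMap ν Q u * (-(x - u) * stdGauss (x - u))) x := by
  rw [funext (opS_eq_integral_transportMap_mul ν Q)]
  exact hasDerivAt_integral_mul_stdGauss (abs_transportMap_le hL0 hL hQ hQb)
    (lipschitzWith_transportMap hL0 hL hQ hQb).continuous.aestronglyMeasurable x

end transportMap

theorem stmt_8_general (ν : Measure ℝ)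
    -- L is a Lipschitz constant for Q_ν on (0,1)
    (L : ℝ) (hL0 : 0 ≤ L)
    (hL : ∀ u ∈ Set.Ioo (0 : ℝ) 1, ∀ v ∈ Set.Ioo (0 : ℝ) 1,
      |quantile ν u - quantile ν v| ≤ L * |u - v|)
    (Q Q' : ℝ → ℝ) (hQm : Measurable Q) (hQ'm : Measurable Q')
    (R : ℝ) (hQb : ∀ y ∈ Set.Ioo (0 : ℝ) 1, |Q y| ≤ R)
    (hQ'b : ∀ y ∈ Set.Ioo (0 : ℝ) 1, |Q' y| ≤ R)
    (C : ℝ) (hC : ∀ y ∈ Set.Ioo (0 : ℝ) 1, |Q y - Q' y| ≤ C) :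
    ∀ x, |deriv (opS ν Q) x - deriv (opS ν Q') x| ≤ L * C := by
  intro x
  rw [(hasDerivAt_opS hL0 hL hQm hQb x).deriv, (hasDerivAt_opS hL0 hL hQ'm hQ'b x).deriv,
    ← integral_sub (integrable_transportMap_mul_deriv_stdGauss hL0 hL hQm hQb x)
      (integrable_transportMap_mul_deriv_stdGauss hL0 hL hQ'm hQ'b x)]
  simp_rw [← sub_mul]
  refine abs_integral_mul_deriv_stdGauss_le (fun u => ?_) x
  exact abs_transportMap_sub_le hL0 hL hQm hQb hQ'm hQ'b fun y hy => by
    rw [sub_sub_sub_cancel_left, abs_sub_comm]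
    exact hC y hy

/-- Under Assumption (A1)–(A3), for bounded measurable `Q, Q̃`, the derivatives
of `S_Q` and `S_Q̃` satisfy `‖S_Q' − S_{Q̃}'‖_∞ ≤ L ‖Q − Q̃‖_∞`, where `L` is the
Lipschitz constant of `Q_ν` on `(0,1)`. -/
theorem stmt_8 (μ ν : Measure ℝ) [IsProbabilityMeasure μ] [IsProbabilityMeasure ν]
    -- (A1): ν absolutely continuous
    (hA1 : ν ≪ volume)
    -- (A2): supp μ ⊆ int(co(supp ν))
    (hA2 : msupport μ ⊆ interior (convexHull ℝ (msupport ν)))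
    -- (A3): density of ν bounded away from zero on co(supp ν)
    (c : ℝ) (hc : 0 < c)
    (hA3 : ∀ᵐ x ∂volume, x ∈ convexHull ℝ (msupport ν) →
      c ≤ (ν.rnDeriv volume x).toReal)
    -- L is a Lipschitz constant for Q_ν on (0,1)
    (L : ℝ) (hL0 : 0 ≤ L)
    (hL : ∀ u ∈ Set.Ioo (0 : ℝ) 1, ∀ v ∈ Set.Ioo (0 : ℝ) 1,
      |quantile ν u - quantile ν v| ≤ L * |u - v|)
    (Q Q' : ℝ → ℝ) (hQm : Measurable Q) (hQ'm : Measurable Q')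
    (R : ℝ) (hQb : ∀ y ∈ Set.Ioo (0 : ℝ) 1, |Q y| ≤ R)
    (hQ'b : ∀ y ∈ Set.Ioo (0 : ℝ) 1, |Q' y| ≤ R)
    (C : ℝ) (hC : ∀ y ∈ Set.Ioo (0 : ℝ) 1, |Q y - Q' y| ≤ C) :
    ∀ x, |deriv (opS ν Q) x - deriv (opS ν Q') x| ≤ L * C :=
  stmt_8_general ν L hL0 hL Q Q' hQm hQ'm R hQb hQ'b C hC
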